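/- arXiv:2507.23345 — 9 statements merged into one kernel-verified Lean document; each statement's English description precedes it below -/
import Mathlib

section
/- Let K be the complete graph on N² nodes (N ≥ 2) and let C be an edge-coloring of K using at most N colors and at least two colors. Then there exists a bichromatic triangle, i.e., three distinct nodes x, y, z such that the multiset of colors {C(x,y), C(x,z), C(y,z)} contains exactly two distinct colors. -/
/-- Exactly two distinct colors appear among the three given colors. -/
def Bichrom {α : Type*} (c₁ c₂ c₃ : α) : Prop :=
  (c₁ = c₂ ∧ c₁ ≠ c₃) ∨ (c₁ = c₃ ∧ c₁ ≠ c₂) ∨ (c₂ = c₃ ∧ c₂ ≠ c₁)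

/-- A complete graph on N² nodes (N ≥ 2) edge-colored with at most N colors,
using at least two colors, contains a bichromatic triangle. -/
theorem ward_szabo_bichromatic_exists
    {V : Type*} [Fintype V] (N : ℕ) (hN : 2 ≤ N)
    (hcard : Fintype.card V = N ^ 2)
    (C : V → V → Fin N)
    (hsym : ∀ x y : V, C x y = C y x)
    (htwo : ∃ a b c d : V, a ≠ b ∧ c ≠ d ∧ C a b ≠ C c d) :
    ∃ x y z : V, x ≠ y ∧ x ≠ z ∧ y ≠ z ∧ Bichrom (C x y) (C x z) (C y z) := by
  classical
  by_contra hcon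
  push_neg at hcon
  have hno : ∀ x y z : V, x ≠ y → x ≠ z → y ≠ z → ¬ Bichrom (C x y) (C x z) (C y z) := by
    intro x y z hxy hxz hyz hb
    have := hcon x y z
    tauto
  have htrans : ∀ x y z : V, x ≠ y → x ≠ z → y ≠ z → C x y = C x z → C y z = C x y := by
    intro x y z hxy hxz hyz he
    by_contra hne
    exact hno x y z hxy hxz hyz (Or.inl ⟨he, fun h => hne h.symm⟩)
  have hVpos : 0 < Fintype.card V := by
    rw [hcard]; exact pow_pos (by omega) 2
  obtain ⟨v⟩ := Fintype.card_pos_iff.mp hVpos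
  obtain ⟨k, hk⟩ := Nat.exists_eq_add_of_le hN
  obtain ⟨c, -, hc⟩ := Finset.exists_lt_card_fiber_of_mul_lt_card_of_maps_to
    (s := (Finset.univ.erase v)) (t := (Finset.univ : Finset (Fin N)))
    (f := fun u => C v u) (n := N - 1)
    (fun a _ => Finset.mem_univ _)
    (by
      rw [Finset.card_univ, Fintype.card_fin,
        Finset.card_erase_of_mem (Finset.mem_univ v), Finset.card_univ, hcard]
      subst hk
      have h1 : (2 + k) * (2 + k - 1) = k * k + 3 * k + 2 := by
        rw [show 2 + k - 1 = k + 1 by omega]; ring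
      have h2 : (2 + k) ^ 2 = k * k + 4 * k + 4 := by ring
      omega)
  set S : Finset V := (Finset.univ.erase v).filter (fun u => C v u = c) with hSdef
  have hScard : N ≤ S.card := by omega
  have hvS : v ∉ S := by
    intro h
    rw [hSdef, Finset.mem_filter, Finset.mem_erase] at h
    exact h.1.1 rfl
  set B : Finset V := insert v S with hBdef
  have hvB : v ∈ B := Finset.mem_insert_self v S
  have hBmem : ∀ x ∈ B, x ≠ v → C v x = c := by
    intro x hx hxv
    rcases Finset.mem_insert.mp hx with rfl | hxS
    · exact absurd rfl hxv
    · exact (Finset.mem_filter.mp hxS).2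
  have hB : ∀ x ∈ B, ∀ y ∈ B, x ≠ y → C x y = c := by
    intro x hx y hy hxy
    rcases eq_or_ne x v with rfl | hxv
    · exact hBmem y hy (Ne.symm hxy)
    · rcases eq_or_ne y v with rfl | hyv
      · rw [hsym]; exact hBmem x hx hxv
      · have hvx := hBmem x hx hxv
        have hvy := hBmem y hy hyv
        have := htrans v x y (Ne.symm hxv) (Ne.symm hyv) hxy (hvx.trans hvy.symm)
        rw [this, hvx]
  obtain ⟨w, hwB⟩ : ∃ w, w ∉ B := by
    by_contra h
    push_neg at h
    obtain ⟨a, b, c', d, hab, hcd, hne⟩ := htwo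
    exact hne ((hB a (h a) b (h b) hab).trans (hB c' (h c') d (h d) hcd).symm)
  have hwv : w ≠ v := fun h => hwB (h ▸ hvB)
  have hinj : Set.InjOn (fun x => C w x) B := by
    intro x hx y hy he
    by_contra hxy
    have hx' : x ∈ B := hx
    have hy' : y ∈ B := hy
    have hxyc : C x y = c := hB x hx' y hy' hxy
    have hwx : w ≠ x := fun h => hwB (h ▸ hx')
    have hwy : w ≠ y := fun h => hwB (h ▸ hy')
    have h1 : C x y = C w x := htrans w x y hwx hwy hxy he
    have h2 : C w x = c := h1 ▸ hxyc
    have h3 : C v w = c := by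
      rcases eq_or_ne x v with rfl | hxv
      · rw [hsym]; exact h2
      · have hxv' : C x v = c := by rw [hsym]; exact hBmem x hx' hxv
        have hxw : C x w = c := by rw [hsym]; exact h2
        have := htrans x v w hxv (Ne.symm hwx) (Ne.symm hwv) (hxv'.trans hxw.symm)
        rw [this, hxv']
    exact hwB (Finset.mem_insert.mpr (Or.inr (Finset.mem_filter.mpr
      ⟨Finset.mem_erase.mpr ⟨hwv, Finset.mem_univ w⟩, h3⟩)))
  have hle : B.card ≤ N := by
    have := Finset.card_le_card_of_injOn (fun x => C w x)
      (fun a _ => Finset.mem_univ _) hinj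
    simpa using this
  have : B.card = S.card + 1 := Finset.card_insert_of_notMem hvS
  omega
end

section
/- (Ward–Szabó) The complete graph on N vertices cannot be swell-colored with fewer than √N + 1 colors: if C is an edge-coloring of K_N that uses at least 2 colors and has no bichromatic triangle, then C uses at least √N + 1 colors, i.e., the number of colors m satisfies (m−1)² ≥ N. -/
/-- Ward–Szabó: if a symmetric edge-coloring of K_N uses at least two colors
and admits no bichromatic triangle, then the number m of colors used satisfies (m-1)² ≥ N. -/
theorem ward_szabo_lower_bound
    {V α : Type*} [Fintype V] [DecidableEq V] [DecidableEq α]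
    (N : ℕ) (hN : Fintype.card V = N) [Fintype α]
    (C : V → V → α)
    (hsym : ∀ x y : V, C x y = C y x)
    (colors : Finset α)
    (hcolors : colors =
      Finset.image (fun p : V × V => C p.1 p.2)
        (Finset.univ.filter fun p : V × V => p.1 ≠ p.2))
    (htwo : 2 ≤ colors.card)
    (hno : ¬ ∃ x y z : V, x ≠ y ∧ x ≠ z ∧ y ≠ z ∧ Bichrom (C x y) (C x z) (C y z)) :
    (colors.card - 1) ^ 2 ≥ N := by
  classical
  subst hN
  set m := colors.card with hm
  have hmem : ∀ x y : V, x ≠ y → C x y ∈ colors := by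
    intro x y hxy
    rw [hcolors]
    exact Finset.mem_image.2 ⟨(x, y),
      Finset.mem_filter.2 ⟨Finset.mem_univ _, hxy⟩, rfl⟩
  -- the trichotomy coming from "no bichromatic triangle"
  have hT : ∀ x y z : V, x ≠ y → x ≠ z → y ≠ z →
      (C x y = C x z ∧ C x y = C y z) ∨
      (C x y ≠ C x z ∧ C x y ≠ C y z ∧ C x z ≠ C y z) := by
    intro x y z h1 h2 h3
    by_contra hcon
    exact hno ⟨x, y, z, h1, h2, h3, by unfold Bichrom; tauto⟩
  by_cases hcard : Fintype.card V ≤ 1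
  · have h1 : 1 ≤ (m - 1) ^ 2 := Nat.one_le_pow _ _ (by omega)
    omega
  push_neg at hcard
  obtain ⟨a, b, hab⟩ := Fintype.exists_pair_of_one_lt_card hcard
  -- fix any vertex x
  set x : V := a with hxdef
  -- Claim A: x sees at least two colors
  have claimA : ∃ y w : V, y ≠ x ∧ w ≠ x ∧ C x y ≠ C x w := by
    by_contra hA
    push_neg at hA
    have hb : b ≠ x := Ne.symm hab
    set c : α := C x b with hc
    have hall : ∀ p : V × V, p.1 ≠ p.2 → C p.1 p.2 = c := by
      rintro ⟨u, v⟩ huv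
      dsimp only at huv ⊢
      by_cases hu : u = x
      · subst hu
        exact hA v b (fun h => huv h.symm) hb
      · by_cases hv : v = x
        · subst hv
          rw [hsym]
          exact hA u b (fun h => hu h) hb
        · have h1 : C x u = c := hA u b (fun h => hu h) hb
          have h2 : C x v = c := hA v b (fun h => hv h) hb
          rcases hT x u v (Ne.symm hu) (Ne.symm hv) huv with ⟨he1, he2⟩ | ⟨hne, _, _⟩
          · rw [← he2, h1]
          · exact absurd (h1.trans h2.symm) hne
    have hsub : colors ⊆ {c} := by
      intro d hd
      rw [hcolors] at hd
      obtain ⟨p, hp, rfl⟩ := Finset.mem_image.1 hd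
      have := Finset.mem_filter.1 hp
      simp [hall p this.2]
    have := Finset.card_le_card hsub
    simp at this
    omega
  obtain ⟨y₀, w₀, hy₀, hw₀, hyw₀⟩ := claimA
  -- the fiber bound: each color class at x has at most m - 2 elements
  have fiber_bound : ∀ c ∈ colors,
      ((Finset.univ.erase x).filter fun z => C x z = c).card ≤ m - 2 := by
    intro c hcmem
    -- find w ≠ x with C x w ≠ c
    obtain ⟨w, hwx, hwc⟩ : ∃ w : V, w ≠ x ∧ C x w ≠ c := by
      by_cases h : C x y₀ = c
      · exact ⟨w₀, hw₀, fun hh => hyw₀ (h.trans hh.symm)⟩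
      · exact ⟨y₀, hy₀, h⟩
    set s := (Finset.univ.erase x).filter fun z => C x z = c with hs
    set t := (colors.erase (C x w)).erase c with ht
    have hdmem : C x w ∈ colors := hmem x w (Ne.symm hwx)
    have htcard : t.card = m - 2 := by
      rw [ht, Finset.card_erase_of_mem, Finset.card_erase_of_mem hdmem]
      · omega
      · exact Finset.mem_erase.2 ⟨fun h => hwc h.symm, hcmem⟩
    have hzprop : ∀ z ∈ s, z ≠ x ∧ C x z = c := by
      intro z hz
      have := Finset.mem_filter.1 hz
      exact ⟨(Finset.mem_erase.1 this.1).1, this.2⟩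
    have hzw : ∀ z ∈ s, z ≠ w := by
      intro z hz h
      obtain ⟨_, hzc⟩ := hzprop z hz
      exact hwc (h ▸ hzc)
    have hmap : ∀ z ∈ s, C z w ∈ t := by
      intro z hz
      obtain ⟨hzx, hzc⟩ := hzprop z hz
      have hzw' := hzw z hz
      rcases hT x z w (Ne.symm hzx) (Ne.symm hwx) hzw' with ⟨he1, _⟩ | ⟨_, h2, h3⟩
      · exact absurd (hzc ▸ he1 : c = C x w) (fun h => hwc h.symm)
      · refine Finset.mem_erase.2 ⟨?_, Finset.mem_erase.2 ⟨fun h => h3 h.symm, ?_⟩⟩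
        · exact fun h => h2 (hzc.trans h.symm)
        · exact hmem z w hzw'
    have hinj : Set.InjOn (fun z => C z w) s := by
      intro z hz z' hz' heq
      by_contra hzz'
      obtain ⟨hzx, hzc⟩ := hzprop z hz
      obtain ⟨hz'x, hz'c⟩ := hzprop z' hz'
      -- C z z' = c
      have hczz : C z z' = c := by
        rcases hT x z z' (Ne.symm hzx) (Ne.symm hz'x) hzz' with ⟨_, he2⟩ | ⟨hne, _, _⟩
        · rw [← he2, hzc]
        · exact absurd (hzc.trans hz'c.symm) hne
      rcases hT z z' w hzz' (hzw z hz) (hzw z' hz') with ⟨he1, _⟩ | ⟨_, _, h3⟩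
      · -- C z z' = C z w, but C z w ≠ c
        have := hmap z hz
        rw [ht] at this
        have hne := (Finset.mem_erase.1 this).1
        exact hne (he1 ▸ hczz : C z w = c)
      · exact h3 heq
    calc s.card ≤ t.card := Finset.card_le_card_of_injOn _ hmap hinj
      _ = m - 2 := htcard
  -- sum over fibers
  have hfib : (Finset.univ.erase x).card =
      ∑ c ∈ colors, ((Finset.univ.erase x).filter fun z => C x z = c).card := by
    apply Finset.card_eq_sum_card_fiberwise
    intro z hz
    exact hmem x z (Ne.symm (Finset.mem_erase.1 hz).1)
  have hsum : ∑ c ∈ colors, ((Finset.univ.erase x).filter fun z => C x z = c).card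
      ≤ m * (m - 2) := by
    calc _ ≤ ∑ _c ∈ colors, (m - 2) := Finset.sum_le_sum fiber_bound
      _ = m * (m - 2) := by rw [Finset.sum_const, smul_eq_mul]
  have hcarderase : (Finset.univ.erase x).card = Fintype.card V - 1 := by
    rw [Finset.card_erase_of_mem (Finset.mem_univ x), Finset.card_univ]
  have key : Fintype.card V - 1 ≤ m * (m - 2) := by
    rw [← hcarderase, hfib]; exact hsum
  obtain ⟨k, hk⟩ : ∃ k, m = k + 2 := ⟨m - 2, by omega⟩
  rw [hk] at key ⊢
  have h1 : (k + 2) * (k + 2 - 2) = k * k + 2 * k := by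
    rw [Nat.add_sub_cancel]; ring
  have h2 : (k + 2 - 1) ^ 2 = k * k + 2 * k + 1 := by
    have : k + 2 - 1 = k + 1 := rfl
    rw [this]; ring
  rw [h2]
  rw [h1] at key
  omega
end

section
/- Let C be an edge-coloring of the complete graph on N² vertices using at most N colors, and let a, b, c be three distinct vertices with C(a,b) ≠ C(a,c). Then there exists a bichromatic triangle {x,y,z} with {x,y,z} ∩ {a,b,c} ≠ ∅ (a 'basic' bichromatic triangle). -/
/-- on a complete graph with N² vertices colored with at most N colors,
given distinct a, b, c with C(a,b) ≠ C(a,c), there is a *basic* bichromatic triangle,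
i.e. one sharing a vertex with {a, b, c}. -/
theorem basic_bichromatic_triangle_exists
    {V : Type*} [Fintype V] (N : ℕ)
    (hcard : Fintype.card V = N ^ 2)
    (C : V → V → Fin N)
    (hsym : ∀ x y : V, C x y = C y x)
    (a b c : V) (hab : a ≠ b) (hac : a ≠ c) (hbc : b ≠ c)
    (hcol : C a b ≠ C a c) :
    ∃ x y z : V, x ≠ y ∧ x ≠ z ∧ y ≠ z ∧
      Bichrom (C x y) (C x z) (C y z) ∧
      (({x, y, z} : Set V) ∩ {a, b, c}).Nonempty := by
  classical
  by_contra h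
  push_neg at h
  -- helper: no bichromatic triangle whose first vertex is in {a,b,c}
  have H : ∀ x y z : V, x ≠ y → x ≠ z → y ≠ z → x ∈ ({a, b, c} : Set V) →
      ¬ Bichrom (C x y) (C x z) (C y z) := by
    intro x y z h1 h2 h3 hx hb
    have hemp := h x y z h1 h2 h3 hb
    have hmem : x ∈ ({x, y, z} : Set V) ∩ {a, b, c} :=
      ⟨Set.mem_insert _ _, hx⟩
    rw [hemp] at hmem
    exact hmem
  -- N ≥ 2
  have hN : 2 ≤ N := by
    rcases N with _ | _ | n
    · exact (C a b).elim0
    · exact absurd (Fin.ext (by omega : (C a b).val = (C a c).val)) hcol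
    · omega
  -- step 1 : edges inside a color class at a have that color
  have step1 : ∀ x y : V, x ≠ a → y ≠ a → x ≠ y → C a x = C a y → C x y = C a x := by
    intro x y hx hy hxy hC
    by_contra hne
    exact H a x y (Ne.symm hx) (Ne.symm hy) hxy (by simp)
      (Or.inl ⟨hC, fun he => hne he.symm⟩)
  -- pigeonhole
  have hmaps : ∀ x ∈ Finset.univ.erase a, C a x ∈ (Finset.univ : Finset (Fin N)) :=
    fun _ _ => Finset.mem_univ _
  have hlt : (Finset.univ : Finset (Fin N)).card * (N - 1) < (Finset.univ.erase a).card := by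
    rw [Finset.card_erase_of_mem (Finset.mem_univ a), Finset.card_univ, Finset.card_univ,
      Fintype.card_fin, hcard]
    zify [show (1:ℕ) ≤ N by omega, show (1:ℕ) ≤ N ^ 2 by nlinarith]
    nlinarith
  obtain ⟨k, -, hk⟩ := Finset.exists_lt_card_fiber_of_mul_lt_card_of_maps_to hmaps hlt
  set S := (Finset.univ.erase a).filter (fun x => C a x = k) with hS
  have hSmem : ∀ x ∈ S, x ≠ a ∧ C a x = k := by
    intro x hx
    simp only [hS, Finset.mem_filter, Finset.mem_erase] at hx
    exact ⟨hx.1.1, hx.2⟩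
  -- choose v ∈ {b,c} with C a v ≠ k
  obtain ⟨v, hvbc, hvk⟩ : ∃ v, v ∈ ({b, c} : Set V) ∧ C a v ≠ k := by
    by_cases hbk : C a b = k
    · exact ⟨c, by simp, fun hck => hcol (hbk.trans hck.symm)⟩
    · exact ⟨b, by simp, hbk⟩
  have hva : v ≠ a := by
    rcases hvbc with rfl | rfl
    · exact hab.symm
    · exact hac.symm
  have hvabc : v ∈ ({a, b, c} : Set V) := by
    rcases hvbc with rfl | h'
    · simp
    · simp_all
  -- fact A : for x ∈ S, C x v ∉ {k, C a v}
  have factA : ∀ x ∈ S, C x v ≠ k ∧ C x v ≠ C a v := by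
    intro x hx
    obtain ⟨hxa, hxk⟩ := hSmem x hx
    have hxv : x ≠ v := fun he => hvk (he ▸ hxk)
    have hnb := H a x v (Ne.symm hxa) (Ne.symm hva) hxv (by simp)
    rw [hxk] at hnb
    constructor
    · intro he
      exact hnb (Or.inr (Or.inl ⟨he.symm, Ne.symm hvk⟩))
    · intro he
      exact hnb (Or.inr (Or.inr ⟨he.symm, hvk⟩))
  -- fact B : x ↦ C v x is injective on S
  have factB : ∀ x ∈ S, ∀ y ∈ S, x ≠ y → C v x ≠ C v y := by
    intro x hx y hy hxy he
    obtain ⟨hxa, hxk⟩ := hSmem x hx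
    obtain ⟨hya, hyk⟩ := hSmem y hy
    have hxv : v ≠ x := fun h' => hvk (h' ▸ hxk)
    have hyv : v ≠ y := fun h' => hvk (h' ▸ hyk)
    have hxyk : C x y = k := (step1 x y hxa hya hxy (hxk.trans hyk.symm)).trans hxk
    have hvxk : C v x ≠ k := by rw [hsym v x]; exact (factA x hx).1
    exact H v x y hxv hyv hxy hvabc (Or.inl ⟨he, hxyk ▸ hvxk⟩)
  -- injection from S into Fin N \ {k, C a v}
  have hinj : ∀ x ∈ S, C v x ∈ (Finset.univ.erase k).erase (C a v) := by
    intro x hx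
    obtain ⟨h1, h2⟩ := factA x hx
    rw [Finset.mem_erase, Finset.mem_erase]
    refine ⟨fun he => h2 (by rw [hsym x v]; exact he),
      fun he => h1 (by rw [hsym x v]; exact he), Finset.mem_univ _⟩
  have hcardle : S.card ≤ ((Finset.univ.erase k).erase (C a v)).card :=
    Finset.card_le_card_of_injOn (fun x => C v x) hinj
      (fun x hx y hy he => by
        by_contra hne
        exact factB x hx y hy hne he)
  have hcT : ((Finset.univ.erase k).erase (C a v)).card = N - 2 := by
    rw [Finset.card_erase_of_mem (Finset.mem_erase.mpr ⟨hvk, Finset.mem_univ _⟩),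
      Finset.card_erase_of_mem (Finset.mem_univ _), Finset.card_univ, Fintype.card_fin]
    omega
  omega
end

section
/- Reduction correctness (Pigeon to Alternative Categorized Pigeon): Let f : F → F be a function on a finite set F with distinguished element v* ∈ F and distinguished element 0 ∈ F. Define p, h : F × F → F by p(x,y) = x and h(x,y) = x if f(y) = v*; h(x,y) = v* if f(y) = x and f(y) ≠ v*; h(x,y) = f(y) otherwise. Then: (1) for any (x,y) ≠ (0,0) with h(x,y) = p(x,y), one has f(y) = v*; and (2) for any two distinct pairs (x₁,y₁), (x₂,y₂) ≠ (0,0) with p(x₁,y₁) = p(x₂,y₂) and h(x₁,y₁) = h(x₂,y₂), either f(y₁) = v*, or f(y₂) = v*, or (y₁ ≠ y₂ and f(y₁) = f(y₂)). -/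
/-- reduction correctness from Pigeon to Alternative Categorized Pigeon.
Here z plays the role of the removed element (0,0) (both coordinates equal z). -/
theorem pigeon_to_alt_categorized_pigeon
    {F : Type*} [DecidableEq F]
    (f : F → F) (vstar z : F)
    (h : F → F → F)
    (hh : ∀ x y : F, h x y =
      if f y = vstar then x else if f y = x then vstar else f y) :
    (∀ x y : F, (x, y) ≠ (z, z) → h x y = x → f y = vstar) ∧
    (∀ x₁ y₁ x₂ y₂ : F, (x₁, y₁) ≠ (x₂, y₂) →
      (x₁, y₁) ≠ (z, z) → (x₂, y₂) ≠ (z, z) →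
      x₁ = x₂ → h x₁ y₁ = h x₂ y₂ →
      f y₁ = vstar ∨ f y₂ = vstar ∨ (y₁ ≠ y₂ ∧ f y₁ = f y₂)) := by
  constructor
  · intro x y _ hx
    rw [hh] at hx
    split_ifs at hx with h1 h2
    · exact h1
    · exact absurd (h2.trans hx.symm) h1
    · exact absurd hx h2
  · intro x₁ y₁ x₂ y₂ hne _ _ hx hhh
    subst hx
    have hy : y₁ ≠ y₂ := fun hy => hne (by rw [hy])
    rw [hh, hh] at hhh
    by_cases h1 : f y₁ = vstar
    · exact Or.inl h1
    by_cases h2 : f y₂ = vstar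
    · exact Or.inr (Or.inl h2)
    refine Or.inr (Or.inr ⟨hy, ?_⟩)
    simp only [if_neg h1, if_neg h2] at hhh
    split_ifs at hhh with a b b
    · exact a.trans b.symm
    · exact absurd hhh.symm h2
    · exact absurd hhh h1
    · exact hhh
end

section
/- Reduction correctness (Categorized Pigeon with one removed element to Pigeon): Let p : S → A and h : S → B with π ∈ S, and let 0, 1 be two distinct elements of A. Define f : S → A × B by f(π) = (1, h(π)) and f(x) = (p(x), h(x)) for x ≠ π, and set v* = (0, h(π)). Then: (1) if f(x) = v* then x ≠ π and h(x) = h(π); and (2) if x ≠ y and f(x) = f(y), then h(x) = h(y), and moreover either one of x, y equals π (in which case the other satisfies h(·) = h(π)), or both differ from π and satisfy p(x) = p(y) as well. -/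
/-- reduction correctness from Categorized Pigeon with one removed
element to Pigeon, with `o` and `i` the two distinct marker elements of A. -/
theorem categorized_one_removed_to_pigeon
    {S A B : Type*} [DecidableEq S]
    (p : S → A) (h : S → B) (π : S)
    (o i : A) (hoi : o ≠ i)
    (f : S → A × B)
    (hf : ∀ x : S, f x = if x = π then (i, h π) else (p x, h x)) :
    (∀ x : S, f x = (o, h π) → x ≠ π ∧ h x = h π) ∧
    (∀ x y : S, x ≠ y → f x = f y →
      h x = h y ∧
      ((x = π ∧ h y = h π) ∨ (y = π ∧ h x = h π) ∨
        (x ≠ π ∧ y ≠ π ∧ p x = p y))) := by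
  constructor
  · intro x hx
    rw [hf x] at hx
    by_cases hxπ : x = π
    · simp [hxπ] at hx
      exact absurd hx.symm hoi
    · simp [hxπ] at hx
      exact ⟨hxπ, hx.2⟩
  · intro x y hxy hfxy
    rw [hf x, hf y] at hfxy
    by_cases hxπ : x = π
    · by_cases hyπ : y = π
      · exact absurd (hxπ.trans hyπ.symm) hxy
      · simp [hxπ, hyπ] at hfxy
        subst hxπ
        exact ⟨hfxy.2, Or.inl ⟨rfl, hfxy.2.symm⟩⟩
    · by_cases hyπ : y = π
      · simp [hxπ, hyπ] at hfxy
        subst hyπ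
        exact ⟨hfxy.2, Or.inr (Or.inl ⟨rfl, hfxy.2⟩)⟩
      · simp [hxπ, hyπ] at hfxy
        exact ⟨hfxy.2, Or.inr (Or.inr ⟨hxπ, hyπ, hfxy.1⟩)⟩
end

section
/- Reduction correctness (Basic Ward–Szabó to Alternative Categorized Pigeon): Let C be a symmetric edge-coloring of a complete graph and a, b, c distinct vertices with C(a,b) ≠ C(a,c). Define p(x) = C(a,x) and h(x) = C(b,x) if C(a,x) ≠ C(a,b), and h(x) = C(c,x) otherwise. Then: (1) any x ≠ a with h(x) = p(x) yields a bichromatic triangle among {a,b,x} or {a,c,x}; and (2) any two distinct x, y ≠ a with p(x) = p(y) and h(x) = h(y) yield a bichromatic triangle among {a,b,x}, {a,c,x}, {a,x,y}, {b,x,y}, or {c,x,y}. -/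
/-- The triangle {u,v,w} (three distinct vertices) is bichromatic under C. -/
def BichromTri {V α : Type*} (C : V → V → α) (u v w : V) : Prop :=
  u ≠ v ∧ u ≠ w ∧ v ≠ w ∧ Bichrom (C u v) (C u w) (C v w)

/-- reduction correctness from Basic Ward–Szabó to Alternative
Categorized Pigeon. -/
theorem basic_ward_szabo_to_alt_categorized
    {V α : Type*} [DecidableEq α]
    (C : V → V → α)
    (hsym : ∀ x y : V, C x y = C y x)
    (a b c : V) (hab : a ≠ b) (hac : a ≠ c) (hbc : b ≠ c)
    (hcol : C a b ≠ C a c)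
    (p h : V → α)
    (hp : ∀ x : V, p x = C a x)
    (hh : ∀ x : V, h x = if C a x ≠ C a b then C b x else C c x) :
    (∀ x : V, x ≠ a → h x = p x →
      BichromTri C a b x ∨ BichromTri C a c x) ∧
    (∀ x y : V, x ≠ y → x ≠ a → y ≠ a → p x = p y → h x = h y →
      BichromTri C a b x ∨ BichromTri C a c x ∨
      BichromTri C a x y ∨ BichromTri C b x y ∨ BichromTri C c x y) := by
  constructor
  · intro x hxa hhp
    rw [hp, hh] at hhp
    by_cases hx : C a x = C a b
    · rw [if_neg (by simpa using hx)] at hhp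
      have hxc : x ≠ c := by rintro rfl; exact hcol hx.symm
      exact Or.inr ⟨hac, fun e => hxa e.symm, fun e => hxc e.symm,
        Or.inr (Or.inr ⟨hhp.symm, by rw [hx]; exact hcol⟩)⟩
    · rw [if_pos hx] at hhp
      have hxb : x ≠ b := by rintro rfl; exact hx rfl
      exact Or.inl ⟨hab, fun e => hxa e.symm, fun e => hxb e.symm,
        Or.inr (Or.inr ⟨hhp.symm, hx⟩)⟩
  · intro x y hxy hxa hya hpxy hhxy
    rw [hp, hp] at hpxy
    rw [hh, hh] at hhxy
    by_cases hx : C a x = C a b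
    · rw [if_neg (by simpa using hx), if_neg (by simpa [← hpxy] using hx)] at hhxy
      have hxc : x ≠ c := by rintro rfl; exact hcol hx.symm
      have hyc : y ≠ c := by rintro rfl; exact hcol (hpxy ▸ hx).symm
      by_cases h1 : C c x = C x y
      · by_cases h2 : C a x = C x y
        · -- C a x = C x y = C c x, and C a x = C a b ≠ C a c: triangle a c x
          exact Or.inr (Or.inl ⟨hac, fun e => hxa e.symm, fun e => hxc e.symm,
            Or.inr (Or.inr ⟨h2.trans h1.symm, by rw [hx]; exact hcol⟩)⟩)
        · -- triangle a x y: C a x = C a y, C a x ≠ C x y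
          exact Or.inr (Or.inr (Or.inl ⟨fun e => hxa e.symm, fun e => hya e.symm, hxy,
            Or.inl ⟨hpxy, h2⟩⟩))
      · -- triangle c x y: C c x = C c y ≠ C x y
        exact Or.inr (Or.inr (Or.inr (Or.inr ⟨fun e => hxc e.symm, fun e => hyc e.symm, hxy,
          Or.inl ⟨hhxy, h1⟩⟩)))
    · have hy : C a y ≠ C a b := fun e => hx (hpxy.trans e)
      rw [if_pos hx, if_pos hy] at hhxy
      have hxb : x ≠ b := by rintro rfl; exact hx rfl
      have hyb : y ≠ b := by rintro rfl; exact hy rfl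
      by_cases h1 : C b x = C x y
      · by_cases h2 : C a x = C x y
        · -- C a x = C x y = C b x, C a x ≠ C a b: triangle a b x
          exact Or.inl ⟨hab, fun e => hxa e.symm, fun e => hxb e.symm,
            Or.inr (Or.inr ⟨h2.trans h1.symm, hx⟩)⟩
        · exact Or.inr (Or.inr (Or.inl ⟨fun e => hxa e.symm, fun e => hya e.symm, hxy,
            Or.inl ⟨hpxy, h2⟩⟩))
      · exact Or.inr (Or.inr (Or.inr (Or.inl ⟨fun e => hxb e.symm, fun e => hyb e.symm, hxy,
          Or.inl ⟨hhxy, h1⟩⟩)))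
end

section
/- Reduction correctness (Pigeon to Categorized Pigeon, hardness direction): Let f : X → X with target v* ∈ X, let K be a finite index set, define Π = {(e_i, x₀) : i ∈ K} ⊆ A × X where the e_i are pairwise distinct elements of A and x₀ ∈ X is fixed. Define p(b,x) = b and h(b,x) = v* if (b,x) ∈ Π, h(b,x) = f(x) otherwise. Then: (1) any (b,x) ∉ Π with h(b,x) ∈ h(Π) satisfies f(x) = v*; and (2) any two distinct (b,x), (c,y) ∉ Π with p(b,x) = p(c,y) and h(b,x) = h(c,y) satisfy x ≠ y, and either f(x) = v*, or f(y) = v*, or f(x) = f(y). -/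
/-- reduction correctness from Pigeon to Categorized Pigeon
(hardness direction), with removed set Rm = E × {x₀}. -/
theorem pigeon_to_categorized_pigeon
    {A X : Type*} [DecidableEq A] [DecidableEq X]
    (f : X → X) (vstar x₀ : X)
    (E : Finset A)
    (Rm : Finset (A × X)) (hRm : Rm = E ×ˢ {x₀})
    (h : A × X → X)
    (hh : ∀ q : A × X, h q = if q ∈ Rm then vstar else f q.2) :
    (∀ b : A, ∀ x : X, (b, x) ∉ Rm →
      (∃ q ∈ Rm, h (b, x) = h q) → f x = vstar) ∧
    (∀ b c : A, ∀ x y : X, (b, x) ≠ (c, y) →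
      (b, x) ∉ Rm → (c, y) ∉ Rm → b = c → h (b, x) = h (c, y) →
      x ≠ y ∧ (f x = vstar ∨ f y = vstar ∨ f x = f y)) := by
  constructor
  · rintro b x hbx ⟨q, hq, heq⟩
    rw [hh, hh, if_neg hbx, if_pos hq] at heq
    exact heq
  · intro b c x y hne hbx hcy hbc heq
    rw [hh, hh, if_neg hbx, if_neg hcy] at heq
    refine ⟨fun hxy => hne (by rw [hbc, hxy]), Or.inr (Or.inr heq)⟩
end

section
/- Reduction correctness (Injective Categorized Pigeon to Pigeon): Let p : S → A, h : S → B, and Π = {π₁, …, π_k} ⊆ S such that h is injective on Π. Suppose w ∈ A satisfies w ≠ p(π₁) (such w is chosen as 0^(m₁) or 1^(m₁)). Define f : S → A × B by f(x) = (p(x), h(x)) and v* = (w, h(π₁)). Then: (1) any x with f(x) = v* satisfies x ∉ Π and h(x) ∈ h(Π); and (2) any distinct x, y with f(x) = f(y) satisfy h(x) = h(y) and p(x) = p(y), and at most one of x, y lies in Π; if exactly one lies in Π, the other satisfies h(·) ∈ h(Π), and if neither does, (x,y) is a collision outside Π. -/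
/-- reduction correctness from Injective Categorized Pigeon to Pigeon. -/
theorem injective_categorized_to_pigeon
    {S A B : Type*}
    (p : S → A) (h : S → B)
    (Rm : Finset S)
    (hinj : ∀ x ∈ Rm, ∀ y ∈ Rm, h x = h y → x = y)
    (pi1 : S) (hpi1 : pi1 ∈ Rm)
    (w : A) (hw : w ≠ p pi1)
    (f : S → A × B) (hf : ∀ x : S, f x = (p x, h x)) :
    (∀ x : S, f x = (w, h pi1) → x ∉ Rm ∧ ∃ y ∈ Rm, h x = h y) ∧
    (∀ x y : S, x ≠ y → f x = f y →
      h x = h y ∧ p x = p y ∧ ¬(x ∈ Rm ∧ y ∈ Rm) ∧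
      (x ∈ Rm → ∃ z ∈ Rm, h y = h z) ∧
      (y ∈ Rm → ∃ z ∈ Rm, h x = h z) ∧
      (x ∉ Rm → y ∉ Rm → x ≠ y ∧ p x = p y ∧ h x = h y)) := by
  constructor
  · intro x hx
    rw [hf] at hx
    obtain ⟨h1, h2⟩ := Prod.mk.injEq .. ▸ hx
    constructor
    · intro hxRm
      exact hw (by rw [← h1, hinj x hxRm pi1 hpi1 h2])
    · exact ⟨pi1, hpi1, h2⟩
  · intro x y hxy hfxy
    rw [hf, hf] at hfxy
    obtain ⟨h1, h2⟩ := Prod.mk.injEq .. ▸ hfxy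
    refine ⟨h2, h1, ?_, ?_, ?_, fun _ _ => ⟨hxy, h1, h2⟩⟩
    · rintro ⟨hx, hy⟩; exact hxy (hinj x hx y hy h2)
    · intro hx; exact ⟨x, hx, h2.symm⟩
    · intro hy; exact ⟨y, hy, h2⟩
end

section
/- Let S, P : V → V and let x₁ ≠ x₂ be two valid vertices (x is valid if S(x) = x or P(S(x)) = x) with S(x₁) = S(x₂). Then exactly one of x₁, x₂ is a fixed point of S: i.e., either (S(x₁) = x₁ and S(x₂) = x₁ ≠ x₂ and P(S(x₂)) = x₂) or (S(x₂) = x₂ and S(x₁) = x₂ ≠ x₁ and P(S(x₁)) = x₁); but the combination P(S(x₁)) = x₁, P(S(x₂)) = x₂, S(x₁) = S(x₂), x₁ ≠ x₂ is impossible. Consequently one of x₁, x₂ satisfies S(xᵢ) = xᵢ, and that xᵢ (being a fixed point of S with P(S(x_j)) = x_j for the other index) yields P(S(xᵢ)) = x_j ≠ xᵢ, i.e., xᵢ is a sink. -/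
/-- collision analysis — if x₁ ≠ x₂ are both valid
(x valid ↔ S(x) = x ∨ P(S(x)) = x) and S(x₁) = S(x₂), then exactly one of them is a
fixed point of S, and that fixed point is a sink (P(S(·)) ≠ ·). -/
theorem collision_of_valid_vertices_gives_sink
    {V : Type*}
    (S P : V → V) (x₁ x₂ : V)
    (hne : x₁ ≠ x₂)
    (hv₁ : S x₁ = x₁ ∨ P (S x₁) = x₁)
    (hv₂ : S x₂ = x₂ ∨ P (S x₂) = x₂)
    (hcol : S x₁ = S x₂) :
    ((S x₁ = x₁ ∧ S x₂ = x₁ ∧ x₁ ≠ x₂ ∧ P (S x₂) = x₂) ∨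
      (S x₂ = x₂ ∧ S x₁ = x₂ ∧ x₂ ≠ x₁ ∧ P (S x₁) = x₁)) ∧
    (∃ i ∈ ({x₁, x₂} : Set V), S i = i ∧ P (S i) ≠ i) := by
  rcases hv₁ with h1 | h1 <;> rcases hv₂ with h2 | h2
  · exact absurd (h1 ▸ hcol ▸ h2 : x₁ = x₂) hne
  · refine ⟨Or.inl ⟨h1, hcol ▸ h1, hne, h2⟩, x₁, Or.inl rfl, h1, ?_⟩
    rw [hcol, h2]; exact hne.symm
  · refine ⟨Or.inr ⟨h2, hcol.trans h2, hne.symm, h1⟩, x₂, Or.inr rfl, h2, ?_⟩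
    rw [← hcol, h1]; exact hne
  · exact absurd (h1 ▸ hcol ▸ h2 : x₁ = x₂) hne
end
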